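/- arXiv:1309.2870 — 4 statements merged into one kernel-verified Lean document; each statement's English description precedes it below -/
import Mathlib

section
/- Let q₁ be a random variable taking values in [0,1] and q₂ a random variable with E[q₁ | q₂] = q₂ almost surely. Then E[H₂(q₁)] + (2/ln 2)·E[(q₁ - q₂)²] ≤ E[H₂(q₂)], where H₂ is the binary entropy function (extended by H₂(0) = H₂(1) = 0). -/
/-!
Since `binEntropy'' x = -1 / (x (1 - x)) ≤ -4` on `(0, 1)`, the function
`x ↦ binEntropy x + 2 (x - c)²` is concave on `[0, 1]` for every `c`. On each level set
`{q₂ = c}` the weighted mean of `q₁` is `c`, so Jensen's inequality there bounds the mass of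
`binEntropy q₁ + 2 (q₁ - q₂)²` by that of `binEntropy c`. Summing over the level sets gives the
inequality in nats; dividing by `log 2` converts it to bits.
-/

open scoped Classical

/-- Binary entropy function (base 2), extended by `binEnt 0 = binEnt 1 = 0`
(automatic since `Real.logb 2 0 = 0`). -/
noncomputable def binEnt (p : ℝ) : ℝ :=
  -(p * Real.logb 2 p) - (1 - p) * Real.logb 2 (1 - p)

open Real Finset

theorem ConcaveOn.sum_mul_le_of_sum_mul_eq {ι : Type*} {s : Set ℝ} {f : ℝ → ℝ}
    (hf : ConcaveOn ℝ s f) {t : Finset ι} {w x : ι → ℝ} (hw : ∀ i ∈ t, 0 ≤ w i)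
    (hx : ∀ i ∈ t, x i ∈ s) {c : ℝ} (hc : ∑ i ∈ t, w i * x i = c * ∑ i ∈ t, w i) :
    ∑ i ∈ t, w i * f (x i) ≤ (∑ i ∈ t, w i) * f c := by
  rcases (sum_nonneg hw).eq_or_lt with hzero | hpos
  · have hw0 : ∀ i ∈ t, w i = 0 := (sum_eq_zero_iff_of_nonneg hw).mp hzero.symm
    rw [← hzero, zero_mul, sum_eq_zero fun i hi => by rw [hw0 i hi, zero_mul]]
  · have hmean : t.centerMass w x = c := by
      simp only [centerMass, smul_eq_mul, hc]
      field_simp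
    have := hf.le_map_centerMass hw hpos hx
    rw [hmean, centerMass, inv_smul_le_iff_of_pos hpos] at this
    simpa using this

theorem sum_mul_le_sum_mul_of_condMean_eq {Ω : Type*} [Fintype Ω] {s : Set ℝ}
    {f : ℝ → ℝ → ℝ} (hf : ∀ c, ConcaveOn ℝ s (f c)) (p q₁ q₂ : Ω → ℝ)
    (hp : ∀ ω, 0 ≤ p ω) (hq₁ : ∀ ω, q₁ ω ∈ s)
    (hcond : ∀ c : ℝ,
      (∑ ω, if q₂ ω = c then p ω * q₁ ω else 0) = c * ∑ ω, if q₂ ω = c then p ω else 0) :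
    ∑ ω, p ω * f (q₂ ω) (q₁ ω) ≤ ∑ ω, p ω * f (q₂ ω) (q₂ ω) := by
  have hmaps : ∀ ω ∈ (univ : Finset Ω), q₂ ω ∈ univ.image q₂ :=
    fun ω _ => mem_image_of_mem q₂ (mem_univ ω)
  rw [← sum_fiberwise_of_maps_to hmaps, ← sum_fiberwise_of_maps_to hmaps]
  refine sum_le_sum fun c _ => ?_
  have hlhs : ∑ ω ∈ univ with q₂ ω = c, p ω * f (q₂ ω) (q₁ ω) =
      ∑ ω ∈ univ with q₂ ω = c, p ω * f c (q₁ ω) :=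
    sum_congr rfl fun ω hω => by rw [(mem_filter.mp hω).2]
  have hrhs : ∑ ω ∈ univ with q₂ ω = c, p ω * f (q₂ ω) (q₂ ω) =
      (∑ ω ∈ univ with q₂ ω = c, p ω) * f c c := by
    rw [sum_mul]
    exact sum_congr rfl fun ω hω => by rw [(mem_filter.mp hω).2]
  rw [hlhs, hrhs]
  refine (hf c).sum_mul_le_of_sum_mul_eq (fun ω _ => hp ω) (fun ω _ => hq₁ ω) ?_
  simpa only [sum_filter] using hcond c

lemma four_le_inv_add_inv_one_sub {x : ℝ} (hx : x ∈ Set.Ioo (0 : ℝ) 1) : 4 ≤ x⁻¹ + (1 - x)⁻¹ := by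
  obtain ⟨h0, h1⟩ := hx
  have h1' : 0 < 1 - x := sub_pos.mpr h1
  rw [inv_add_inv h0.ne' h1'.ne', le_div_iff₀ (mul_pos h0 h1')]
  nlinarith [sq_nonneg (2 * x - 1)]

theorem concaveOn_binEntropy_add_sq (c : ℝ) :
    ConcaveOn ℝ (Set.Icc 0 1) (fun x => binEntropy x + 2 * (x - c) ^ 2) := by
  refine concaveOn_of_hasDerivWithinAt2_nonpos (convex_Icc 0 1) (by fun_prop)
    (f' := fun x => log (1 - x) - log x + 4 * (x - c))
    (f'' := fun x => -(1 - x)⁻¹ - x⁻¹ + 4) ?_ ?_ ?_ <;> rw [interior_Icc]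
  · intro x hx
    have := (hasDerivAt_binEntropy hx.1.ne' hx.2.ne).add
      (((hasDerivAt_id x).sub_const c).pow 2 |>.const_mul 2)
    exact (this.congr_deriv (by simp only [id_eq]; ring)).hasDerivWithinAt
  · intro x hx
    have h1 : (1 : ℝ) - x ≠ 0 := (sub_pos.mpr hx.2).ne'
    have := ((((hasDerivAt_id x).const_sub 1).log h1).sub (hasDerivAt_log hx.1.ne')).add
      (((hasDerivAt_id x).sub_const c).const_mul 4)
    exact (this.congr_deriv (by simp only [id_eq]; ring)).hasDerivWithinAt
  · intro x hx
    linarith [four_le_inv_add_inv_one_sub hx]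

lemma binEnt_eq_binEntropy_div_log_two (x : ℝ) : binEnt x = binEntropy x / log 2 := by
  simp only [binEnt, binEntropy, logb, log_inv]
  ring

theorem stmt1_general {Ω : Type} [Fintype Ω] (p : Ω → ℝ) (hp : ∀ ω, 0 ≤ p ω)
    (q₁ q₂ : Ω → ℝ) (hq₁ : ∀ ω, q₁ ω ∈ Set.Icc (0 : ℝ) 1)
    (hcond : ∀ c : ℝ,
      (∑ ω, if q₂ ω = c then p ω * q₁ ω else 0) = c * ∑ ω, if q₂ ω = c then p ω else 0) :
    (∑ ω, p ω * binEnt (q₁ ω)) + (2 / Real.log 2) * ∑ ω, p ω * (q₁ ω - q₂ ω) ^ 2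
      ≤ ∑ ω, p ω * binEnt (q₂ ω) := by
  have hnats : ∑ ω, p ω * (binEntropy (q₁ ω) + 2 * (q₁ ω - q₂ ω) ^ 2)
      ≤ ∑ ω, p ω * binEntropy (q₂ ω) := by
    simpa using sum_mul_le_sum_mul_of_condMean_eq concaveOn_binEntropy_add_sq p q₁ q₂ hp hq₁ hcond
  simp only [binEnt_eq_binEntropy_div_log_two, ← mul_div_assoc, ← sum_div]
  calc (∑ ω, p ω * binEntropy (q₁ ω)) / log 2 + 2 / log 2 * ∑ ω, p ω * (q₁ ω - q₂ ω) ^ 2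
      = (∑ ω, p ω * (binEntropy (q₁ ω) + 2 * (q₁ ω - q₂ ω) ^ 2)) / log 2 := by
        simp only [mul_add, sum_add_distrib, mul_left_comm _ (2 : ℝ), ← mul_sum]
        ring
    _ ≤ (∑ ω, p ω * binEntropy (q₂ ω)) / log 2 :=
        div_le_div_of_nonneg_right hnats (log_pos one_lt_two).le

/-- If q₁ ∈ [0,1] and E[q₁ | q₂] = q₂ a.s. (on a finite probability space),
then E[H₂(q₁)] + (2/ln 2)·E[(q₁ - q₂)²] ≤ E[H₂(q₂)]. -/
theorem stmt1 {Ω : Type} [Fintype Ω] (p : Ω → ℝ) (hp : ∀ ω, 0 ≤ p ω)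
    (hsum : ∑ ω, p ω = 1)
    (q₁ q₂ : Ω → ℝ) (hq₁ : ∀ ω, q₁ ω ∈ Set.Icc (0 : ℝ) 1)
    (hcond : ∀ c : ℝ,
      (∑ ω, if q₂ ω = c then p ω * q₁ ω else 0) = c * ∑ ω, if q₂ ω = c then p ω else 0) :
    (∑ ω, p ω * binEnt (q₁ ω)) + (2 / Real.log 2) * ∑ ω, p ω * (q₁ ω - q₂ ω) ^ 2
      ≤ ∑ ω, p ω * binEnt (q₂ ω) :=
  stmt1_general p hp q₁ q₂ hq₁ hcond
end

section
/- Let G be a finite abelian group, u uniformly distributed on G and independent of a random variable I, and let μ, ν be random probability tuples over G such that conditionally on each value of I: (a) μ and ν each have a symmetric density w.r.t. u, and (b) u → μ → ν is a Markov chain. Then, unconditionally (averaging over I), u → μ → ν is still a Markov chain. -/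
open scoped Classical

/-- Probability of an event on a finite space with weights p. -/
noncomputable def pr {Ω : Type} [Fintype Ω] (p : Ω → ℝ) (A : Ω → Prop) : ℝ :=
  ∑ ω, if A ω then p ω else 0

/-- Mixtures preserve Markov chains of symmetric densities: if u is
uniform on G and independent of I, and conditionally on each value of I the tuples
μ, ν have symmetric densities w.r.t. u and u → μ → ν is a Markov chain, then
u → μ → ν is a Markov chain unconditionally. -/
theorem stmt14 {Ω G ι : Type} [Fintype Ω] [Fintype G] [AddCommGroup G] [Nonempty G]
    [Fintype ι]
    (p : Ω → ℝ) (hp : ∀ ω, 0 ≤ p ω) (hsum : ∑ ω, p ω = 1)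
    (I : Ω → ι) (u : Ω → G) (μ ν : Ω → G → ℝ)
    (hμ0 : ∀ ω g, 0 ≤ μ ω g) (hμ1 : ∀ ω, ∑ g, μ ω g = 1)
    (hν0 : ∀ ω g, 0 ≤ ν ω g) (hν1 : ∀ ω, ∑ g, ν ω g = 1)
    (huniform : ∀ g : G, pr p (fun ω => u ω = g) = 1 / Fintype.card G)
    (hindep : ∀ (i : ι) (g : G),
      pr p (fun ω => I ω = i ∧ u ω = g)
        = pr p (fun ω => I ω = i) * pr p (fun ω => u ω = g))
    (hsymμ : ∀ i : ι, 0 < pr p (fun ω => I ω = i) →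
      ∀ (l : G → ℝ) (g : G),
        pr p (fun ω => μ ω = l ∧ u ω = g ∧ I ω = i) /
            pr p (fun ω => u ω = g ∧ I ω = i)
          = ((∑ v : G, pr p (fun ω => μ ω = (fun w => l (w - v)) ∧ I ω = i)) /
              pr p (fun ω => I ω = i)) * l g)
    (hsymν : ∀ i : ι, 0 < pr p (fun ω => I ω = i) →
      ∀ (l : G → ℝ) (g : G),
        pr p (fun ω => ν ω = l ∧ u ω = g ∧ I ω = i) /
            pr p (fun ω => u ω = g ∧ I ω = i)
          = ((∑ v : G, pr p (fun ω => ν ω = (fun w => l (w - v)) ∧ I ω = i)) /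
              pr p (fun ω => I ω = i)) * l g)
    (hmarkov : ∀ i : ι, 0 < pr p (fun ω => I ω = i) →
      ∀ (lμ lν : G → ℝ) (g₁ g₂ : G),
        0 < pr p (fun ω => μ ω = lμ ∧ u ω = g₁ ∧ I ω = i) →
        0 < pr p (fun ω => μ ω = lμ ∧ u ω = g₂ ∧ I ω = i) →
        pr p (fun ω => ν ω = lν ∧ μ ω = lμ ∧ u ω = g₁ ∧ I ω = i) /
            pr p (fun ω => μ ω = lμ ∧ u ω = g₁ ∧ I ω = i)
          = pr p (fun ω => ν ω = lν ∧ μ ω = lμ ∧ u ω = g₂ ∧ I ω = i) /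
              pr p (fun ω => μ ω = lμ ∧ u ω = g₂ ∧ I ω = i)) :
    ∀ (lμ lν : G → ℝ) (g₁ g₂ : G),
      0 < pr p (fun ω => μ ω = lμ ∧ u ω = g₁) →
      0 < pr p (fun ω => μ ω = lμ ∧ u ω = g₂) →
      pr p (fun ω => ν ω = lν ∧ μ ω = lμ ∧ u ω = g₁) /
          pr p (fun ω => μ ω = lμ ∧ u ω = g₁)
        = pr p (fun ω => ν ω = lν ∧ μ ω = lμ ∧ u ω = g₂) /
            pr p (fun ω => μ ω = lμ ∧ u ω = g₂) := by
  intro lμ lν g₁ g₂ h1 h2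
  -- basic facts about pr
  have prnn : ∀ A : Ω → Prop, 0 ≤ pr p A := by
    intro A
    apply Finset.sum_nonneg
    intro ω _
    by_cases hA : A ω <;> simp [hA, hp ω]
  have prmono : ∀ A B : Ω → Prop, (∀ ω, A ω → B ω) → pr p A ≤ pr p B := by
    intro A B h
    apply Finset.sum_le_sum
    intro ω _
    by_cases hA : A ω
    · simp [hA, h ω hA]
    · by_cases hB : B ω <;> simp [hA, hB, hp ω]
  have prcongr : ∀ A B : Ω → Prop, (∀ ω, A ω ↔ B ω) → pr p A = pr p B := by
    intro A B h
    apply Finset.sum_congr rfl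
    intro ω _
    exact if_congr (h ω) rfl rfl
  have prsplit : ∀ A : Ω → Prop, pr p A = ∑ i, pr p (fun ω => A ω ∧ I ω = i) := by
    intro A
    unfold pr
    conv_rhs => rw [Finset.sum_comm]
    apply Finset.sum_congr rfl
    intro ω _
    by_cases hA : A ω <;> simp [hA]
  have prpos : ∀ A : Ω → Prop, 0 < pr p A → ∃ ω, A ω := by
    intro A h
    by_contra hc
    push_neg at hc
    have h0 : pr p A = 0 := Finset.sum_eq_zero (fun ω _ => by simp [hc ω])
    linarith
  have hcardpos : (0:ℝ) < (Fintype.card G : ℝ) := Nat.cast_pos.mpr Fintype.card_pos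
  -- the marginal probability of (u = g, I = i)
  have hq : ∀ i g, pr p (fun ω => u ω = g ∧ I ω = i)
      = pr p (fun ω => I ω = i) * (1 / (Fintype.card G : ℝ)) := by
    intro i g
    have e1 : pr p (fun ω => u ω = g ∧ I ω = i) = pr p (fun ω => I ω = i ∧ u ω = g) :=
      prcongr _ _ (fun ω => by tauto)
    rw [e1, hindep i g, huniform g]
  -- splitting of the goal quantities over values of I
  have hDsplit : ∀ g, pr p (fun ω => μ ω = lμ ∧ u ω = g)
      = ∑ i, pr p (fun ω => μ ω = lμ ∧ u ω = g ∧ I ω = i) := by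
    intro g
    rw [prsplit (fun ω => μ ω = lμ ∧ u ω = g)]
    exact Finset.sum_congr rfl (fun i _ => prcongr _ _ (fun ω => by tauto))
  have hNsplit : ∀ g, pr p (fun ω => ν ω = lν ∧ μ ω = lμ ∧ u ω = g)
      = ∑ i, pr p (fun ω => ν ω = lν ∧ μ ω = lμ ∧ u ω = g ∧ I ω = i) := by
    intro g
    rw [prsplit (fun ω => ν ω = lν ∧ μ ω = lμ ∧ u ω = g)]
    exact Finset.sum_congr rfl (fun i _ => prcongr _ _ (fun ω => by tauto))
  -- when P i = 0 everything vanishes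
  have hP0 : ∀ i, pr p (fun ω => I ω = i) = 0 → ∀ g,
      pr p (fun ω => μ ω = lμ ∧ u ω = g ∧ I ω = i) = 0 ∧
      pr p (fun ω => ν ω = lν ∧ μ ω = lμ ∧ u ω = g ∧ I ω = i) = 0 := by
    intro i hPi g
    constructor
    · refine le_antisymm ?_ (prnn _)
      calc pr p (fun ω => μ ω = lμ ∧ u ω = g ∧ I ω = i)
          ≤ pr p (fun ω => I ω = i) := prmono _ _ (fun ω h => h.2.2)
        _ = 0 := hPi
    · refine le_antisymm ?_ (prnn _)
      calc pr p (fun ω => ν ω = lν ∧ μ ω = lμ ∧ u ω = g ∧ I ω = i)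
          ≤ pr p (fun ω => I ω = i) := prmono _ _ (fun ω h => h.2.2.2)
        _ = 0 := hPi
  -- symmetric-density formula for the denominators
  have hdform : ∀ i, 0 < pr p (fun ω => I ω = i) → ∀ g,
      pr p (fun ω => μ ω = lμ ∧ u ω = g ∧ I ω = i)
        = ((∑ v : G, pr p (fun ω => μ ω = (fun w => lμ (w - v)) ∧ I ω = i)) /
              pr p (fun ω => I ω = i)
            * (pr p (fun ω => I ω = i) * (1 / (Fintype.card G : ℝ)))) * lμ g := by
    intro i hPi g
    have hsym := hsymμ i hPi lμ g
    have hqpos : 0 < pr p (fun ω => I ω = i) * (1 / (Fintype.card G : ℝ)) := by positivity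
    have hqne : pr p (fun ω => u ω = g ∧ I ω = i) ≠ 0 := by
      rw [hq i g]; exact ne_of_gt hqpos
    have h2 := (div_eq_iff hqne).mp hsym
    rw [hq i g] at h2
    rw [h2]; ring
  -- lμ is nonnegative
  have hlμnn : ∀ g, 0 ≤ lμ g := by
    obtain ⟨ω, hω⟩ := prpos _ h1
    intro g
    rw [← hω.1]
    exact hμ0 ω g
  -- lμ is positive at g₁ and g₂
  have hlpos : ∀ g, 0 < pr p (fun ω => μ ω = lμ ∧ u ω = g) → 0 < lμ g := by
    intro g hg
    rcases (hlμnn g).lt_or_eq with h | h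
    · exact h
    · exfalso
      have hzero : ∀ i ∈ Finset.univ,
          pr p (fun ω => μ ω = lμ ∧ u ω = g ∧ I ω = i) = 0 := by
        intro i _
        rcases (prnn (fun ω => I ω = i)).lt_or_eq with hPi | hPi
        · rw [hdform i hPi g, ← h]; ring
        · exact (hP0 i hPi.symm g).1
      rw [hDsplit g, Finset.sum_eq_zero hzero] at hg
      exact lt_irrefl _ hg
  have hl1 : 0 < lμ g₁ := hlpos g₁ h1
  have hl2 : 0 < lμ g₂ := hlpos g₂ h2
  -- main claim: per-i linearity in lμ g at g₁ and g₂
  have claim : ∀ i : ι, ∃ ki ri : ℝ,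
      pr p (fun ω => μ ω = lμ ∧ u ω = g₁ ∧ I ω = i) = ki * lμ g₁ ∧
      pr p (fun ω => μ ω = lμ ∧ u ω = g₂ ∧ I ω = i) = ki * lμ g₂ ∧
      pr p (fun ω => ν ω = lν ∧ μ ω = lμ ∧ u ω = g₁ ∧ I ω = i) = ri * lμ g₁ ∧
      pr p (fun ω => ν ω = lν ∧ μ ω = lμ ∧ u ω = g₂ ∧ I ω = i) = ri * lμ g₂ := by
    intro i
    rcases (prnn (fun ω => I ω = i)).lt_or_eq with hPi | hPi
    · -- P i > 0
      have hdg1 := hdform i hPi g₁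
      have hdg2 := hdform i hPi g₂
      set ki : ℝ := (∑ v : G, pr p (fun ω => μ ω = (fun w => lμ (w - v)) ∧ I ω = i)) /
              pr p (fun ω => I ω = i)
            * (pr p (fun ω => I ω = i) * (1 / (Fintype.card G : ℝ))) with hki
      have hkinn : 0 ≤ ki := by
        have hnn : 0 ≤ ki * lμ g₁ := by
          rw [← hdg1]; exact prnn _
        nlinarith
      rcases hkinn.lt_or_eq with hkip | hki0
      · -- ki > 0: use the Markov property
        have hd1pos : 0 < pr p (fun ω => μ ω = lμ ∧ u ω = g₁ ∧ I ω = i) := by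
          rw [hdg1]; exact mul_pos hkip hl1
        have hd2pos : 0 < pr p (fun ω => μ ω = lμ ∧ u ω = g₂ ∧ I ω = i) := by
          rw [hdg2]; exact mul_pos hkip hl2
        have hm := hmarkov i hPi lμ lν g₁ g₂ hd1pos hd2pos
        refine ⟨ki, pr p (fun ω => ν ω = lν ∧ μ ω = lμ ∧ u ω = g₁ ∧ I ω = i) /
            pr p (fun ω => μ ω = lμ ∧ u ω = g₁ ∧ I ω = i) * ki, hdg1, hdg2, ?_, ?_⟩
        · rw [mul_assoc, ← hdg1]
          exact (div_mul_cancel₀ _ (ne_of_gt hd1pos)).symm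
        · rw [hm, mul_assoc, ← hdg2]
          exact (div_mul_cancel₀ _ (ne_of_gt hd2pos)).symm
      · -- ki = 0: everything vanishes
        refine ⟨0, 0, ?_, ?_, ?_, ?_⟩
        · rw [hdg1, ← hki0]
        · rw [hdg2, ← hki0]
        · have hle : pr p (fun ω => ν ω = lν ∧ μ ω = lμ ∧ u ω = g₁ ∧ I ω = i)
              ≤ pr p (fun ω => μ ω = lμ ∧ u ω = g₁ ∧ I ω = i) :=
            prmono _ _ (fun ω h => h.2)
          rw [hdg1, ← hki0, zero_mul] at hle
          simp only [zero_mul]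
          exact le_antisymm hle (prnn _)
        · have hle : pr p (fun ω => ν ω = lν ∧ μ ω = lμ ∧ u ω = g₂ ∧ I ω = i)
              ≤ pr p (fun ω => μ ω = lμ ∧ u ω = g₂ ∧ I ω = i) :=
            prmono _ _ (fun ω h => h.2)
          rw [hdg2, ← hki0, zero_mul] at hle
          simp only [zero_mul]
          exact le_antisymm hle (prnn _)
    · -- P i = 0
      refine ⟨0, 0, ?_, ?_, ?_, ?_⟩ <;> simp only [zero_mul]
      · exact (hP0 i hPi.symm g₁).1
      · exact (hP0 i hPi.symm g₂).1
      · exact (hP0 i hPi.symm g₁).2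
      · exact (hP0 i hPi.symm g₂).2
  choose k r hk1 hk2 hr1 hr2 using claim
  have hD1 : pr p (fun ω => μ ω = lμ ∧ u ω = g₁) = (∑ i, k i) * lμ g₁ := by
    rw [hDsplit g₁, Finset.sum_mul]
    exact Finset.sum_congr rfl (fun i _ => hk1 i)
  have hD2 : pr p (fun ω => μ ω = lμ ∧ u ω = g₂) = (∑ i, k i) * lμ g₂ := by
    rw [hDsplit g₂, Finset.sum_mul]
    exact Finset.sum_congr rfl (fun i _ => hk2 i)
  have hN1 : pr p (fun ω => ν ω = lν ∧ μ ω = lμ ∧ u ω = g₁) = (∑ i, r i) * lμ g₁ := by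
    rw [hNsplit g₁, Finset.sum_mul]
    exact Finset.sum_congr rfl (fun i _ => hr1 i)
  have hN2 : pr p (fun ω => ν ω = lν ∧ μ ω = lμ ∧ u ω = g₂) = (∑ i, r i) * lμ g₂ := by
    rw [hNsplit g₂, Finset.sum_mul]
    exact Finset.sum_congr rfl (fun i _ => hr2 i)
  rw [hD1, hD2, hN1, hN2,
    mul_div_mul_right _ _ (ne_of_gt hl1), mul_div_mul_right _ _ (ne_of_gt hl2)]
end

section
/- Let G be a finite abelian group, u uniform on G, λ a random probability tuple over G with a symmetric density w.r.t. u, φ : (𝔽₂)^K → G a bijection with |G| = 2^K, and ε uniform on (𝔽₂)^K independent of (λ, u). Define the dithered mapping φ₁(c) = φ(c + ε) and set μ₁ = λ ∘ φ₁ (a random probability tuple over (𝔽₂)^K) and c₁ = φ₁⁻¹(u). Then μ₁ has a symmetric density with respect to c₁. -/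
open scoped Classical

lemma pr_congr {Ω : Type} [Fintype Ω] (p : Ω → ℝ) {A B : Ω → Prop}
    (h : ∀ ω, A ω ↔ B ω) : pr p A = pr p B := by
  unfold pr
  exact Finset.sum_congr rfl fun ω _ => by simp only [h ω]

lemma pr_fiber {Ω : Type} {α : Type*} [Fintype Ω] (p : Ω → ℝ) (f : Ω → α) (s : Finset α)
    (hs : ∀ ω, f ω ∈ s) (A : Ω → Prop) :
    pr p A = ∑ a ∈ s, pr p (fun ω => f ω = a ∧ A ω) := by
  unfold pr
  rw [Finset.sum_comm]
  refine Finset.sum_congr rfl fun ω _ => ?_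
  beta_reduce
  by_cases hA : A ω <;> simp [hA, Finset.sum_ite_eq, hs ω]

lemma key_ST {Ω G : Type} [Fintype Ω] [Fintype G] [AddCommGroup G]
    (p : Ω → ℝ) (lam : Ω → G → ℝ) (t : ℝ) (ht : (Fintype.card G : ℝ) = t) (ht0 : t ≠ 0)
    (hmarg : ∀ l : G → ℝ, pr p (fun ω => lam ω = l)
      = (∑ v : G, pr p (fun ω => lam ω = fun w => l (w - v))) * (∑ g, l g) / t)
    (l : G → ℝ) :
    (∑ v : G, pr p (fun ω => lam ω = fun w => l (w - v))) * (∑ g, l g)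
      = ∑ v : G, pr p (fun ω => lam ω = fun w => l (w - v)) := by
  have hv : ∀ v : G, pr p (fun ω => lam ω = fun w => l (w - v))
      = (∑ v : G, pr p (fun ω => lam ω = fun w => l (w - v))) * (∑ g, l g) / t := by
    intro v
    rw [hmarg (fun w => l (w - v))]
    have f1 : (∑ v' : G, pr p (fun ω => lam ω = fun w => l (w - v' - v)))
        = ∑ v' : G, pr p (fun ω => lam ω = fun w => l (w - v')) := by
      have e1 : ∀ v' : G, (fun ω => lam ω = fun w => l (w - v' - v))
          = fun ω => lam ω = fun w => l (w - (v' + v)) := by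
        intro v'; funext ω
        rw [show (fun w => l (w - v' - v)) = fun w => l (w - (v' + v)) from
          funext fun w => by rw [sub_sub]]
      calc (∑ v' : G, pr p (fun ω => lam ω = fun w => l (w - v' - v)))
          = ∑ v' : G, pr p (fun ω => lam ω = fun w => l (w - (v' + v))) :=
            Finset.sum_congr rfl fun v' _ => by rw [e1 v']
        _ = _ := Equiv.sum_comp (Equiv.addRight v)
            fun z => pr p (fun ω => lam ω = fun w => l (w - z))
    have f2 : (∑ g : G, l (g - v)) = ∑ g : G, l g :=
      Equiv.sum_comp (Equiv.subRight v) l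
    rw [f1, f2]
  have hsum : (∑ v : G, pr p (fun ω => lam ω = fun w => l (w - v)))
      = t * ((∑ v : G, pr p (fun ω => lam ω = fun w => l (w - v))) * (∑ g, l g) / t) := by
    conv_lhs => rw [Finset.sum_congr rfl fun v _ => hv v]
    rw [Finset.sum_const, Finset.card_univ, nsmul_eq_mul, ht]
  have h2 : t * ((∑ v : G, pr p (fun ω => lam ω = fun w => l (w - v))) * (∑ g, l g) / t)
      = (∑ v : G, pr p (fun ω => lam ω = fun w => l (w - v))) * (∑ g, l g) := by
    field_simp
  rw [h2] at hsum
  exact hsum.symm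


/-- Dithering preserves symmetry: if u is uniform on G (|G| = 2^K),
λ has a symmetric density w.r.t. u, φ : (𝔽₂)^K → G is a bijection and ε is uniform
on (𝔽₂)^K independent of (λ, u), then with φ₁(c) = φ(c + ε), the tuple
μ₁ = λ ∘ φ₁ has a symmetric density w.r.t. c₁ = φ₁⁻¹(u) = φ⁻¹(u) − ε.
Symmetry is stated in the orbit form p(μ = m | c = c') = p([μ] = [m])·m(c'). -/
theorem stmt15 {Ω G : Type} [Fintype Ω] [Fintype G] [AddCommGroup G] (K : ℕ)
    (hcard : Fintype.card G = 2 ^ K)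
    (φ : (Fin K → ZMod 2) → G) (hφ : Function.Bijective φ)
    (p : Ω → ℝ) (hp : ∀ ω, 0 ≤ p ω) (hsum : ∑ ω, p ω = 1)
    (u : Ω → G) (lam : Ω → G → ℝ)
    (hlam0 : ∀ ω g, 0 ≤ lam ω g) (hlam1 : ∀ ω, ∑ g, lam ω g = 1)
    (ε : Ω → Fin K → ZMod 2)
    (huunif : ∀ g : G, pr p (fun ω => u ω = g) = 1 / Fintype.card G)
    (hεunif : ∀ e : Fin K → ZMod 2, pr p (fun ω => ε ω = e) = 1 / 2 ^ K)
    (hindep : ∀ (e : Fin K → ZMod 2) (l : G → ℝ) (g : G),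
      pr p (fun ω => ε ω = e ∧ lam ω = l ∧ u ω = g)
        = pr p (fun ω => ε ω = e) * pr p (fun ω => lam ω = l ∧ u ω = g))
    (hsym : ∀ (l : G → ℝ) (g : G),
      pr p (fun ω => lam ω = l ∧ u ω = g) / pr p (fun ω => u ω = g)
        = (∑ v : G, pr p (fun ω => lam ω = fun w => l (w - v))) * l g) :
    ∀ (m : (Fin K → ZMod 2) → ℝ) (c : Fin K → ZMod 2),
      pr p (fun ω => (fun c' => lam ω (φ (c' + ε ω))) = m ∧
            Function.invFun φ (u ω) - ε ω = c) /
          pr p (fun ω => Function.invFun φ (u ω) - ε ω = c)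
        = (∑ v : Fin K → ZMod 2,
            pr p (fun ω => (fun c' => lam ω (φ (c' + ε ω))) = fun w => m (w - v))) * m c := by
  intro m c
  have hinv1 : ∀ x, Function.invFun φ (φ x) = x := fun x => Function.leftInverse_invFun hφ.1 x
  have hinv2 : ∀ g, φ (Function.invFun φ g) = g := fun g => Function.rightInverse_invFun hφ.2 g
  have h2K : (2:ℝ)^K ≠ 0 := by positivity
  have hGcast : (Fintype.card G : ℝ) = 2 ^ K := by rw [hcard]; push_cast; ring
  have hune : ∀ g, pr p (fun ω => u ω = g) = 1 / 2 ^ K := by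
    intro g; rw [huunif g, hGcast]
  -- joint density formula
  have hjoint : ∀ (l : G → ℝ) (g : G), pr p (fun ω => lam ω = l ∧ u ω = g)
      = (∑ v : G, pr p (fun ω => lam ω = fun w => l (w - v))) * l g / 2 ^ K := by
    intro l g
    have h := hsym l g
    rw [hune g, div_eq_iff (by positivity : (1:ℝ)/2^K ≠ 0)] at h
    rw [h]; ring
  -- marginal of lam over u fibers
  have hmargl : ∀ l : G → ℝ, pr p (fun ω => lam ω = l)
      = ∑ g : G, pr p (fun ω => lam ω = l ∧ u ω = g) := by
    intro l
    rw [pr_fiber p u Finset.univ (fun _ => Finset.mem_univ _) (fun ω => lam ω = l)]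
    exact Finset.sum_congr rfl fun g _ => pr_congr p fun ω => and_comm
  have hmarg : ∀ l : G → ℝ, pr p (fun ω => lam ω = l)
      = (∑ v : G, pr p (fun ω => lam ω = fun w => l (w - v))) * (∑ g, l g) / 2 ^ K := by
    intro l
    rw [hmargl l, Finset.sum_congr rfl fun g _ => hjoint l g, ← Finset.sum_div,
      ← Finset.mul_sum]
  -- independence of ε from lam alone
  have hepslam : ∀ (e : Fin K → ZMod 2) (l : G → ℝ),
      pr p (fun ω => ε ω = e ∧ lam ω = l) = 1 / 2 ^ K * pr p (fun ω => lam ω = l) := by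
    intro e l
    rw [pr_fiber p u Finset.univ (fun _ => Finset.mem_univ _) (fun ω => ε ω = e ∧ lam ω = l)]
    calc (∑ g : G, pr p (fun ω => u ω = g ∧ ε ω = e ∧ lam ω = l))
        = ∑ g : G, pr p (fun ω => ε ω = e ∧ lam ω = l ∧ u ω = g) :=
          Finset.sum_congr rfl fun g _ => pr_congr p fun ω => by tauto
      _ = ∑ g : G, pr p (fun ω => ε ω = e) * pr p (fun ω => lam ω = l ∧ u ω = g) :=
          Finset.sum_congr rfl fun g _ => hindep e l g
      _ = pr p (fun ω => ε ω = e) * ∑ g : G, pr p (fun ω => lam ω = l ∧ u ω = g) :=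
          (Finset.mul_sum _ _ _).symm
      _ = 1 / 2 ^ K * pr p (fun ω => lam ω = l) := by rw [hεunif e, hmargl l]
  -- independence of ε from u alone
  have hepsu : ∀ (e : Fin K → ZMod 2) (g : G),
      pr p (fun ω => ε ω = e ∧ u ω = g) = 1 / 2 ^ K * (1 / 2 ^ K) := by
    intro e g
    have hmem : ∀ ω, lam ω ∈ Finset.univ.image lam := fun ω =>
      Finset.mem_image_of_mem lam (Finset.mem_univ ω)
    rw [pr_fiber p lam (Finset.univ.image lam) hmem (fun ω => ε ω = e ∧ u ω = g)]
    calc (∑ l ∈ Finset.univ.image lam, pr p (fun ω => lam ω = l ∧ ε ω = e ∧ u ω = g))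
        = ∑ l ∈ Finset.univ.image lam, pr p (fun ω => ε ω = e ∧ lam ω = l ∧ u ω = g) :=
          Finset.sum_congr rfl fun l _ => pr_congr p fun ω => by tauto
      _ = ∑ l ∈ Finset.univ.image lam,
            pr p (fun ω => ε ω = e) * pr p (fun ω => lam ω = l ∧ u ω = g) :=
          Finset.sum_congr rfl fun l _ => hindep e l g
      _ = pr p (fun ω => ε ω = e)
            * ∑ l ∈ Finset.univ.image lam, pr p (fun ω => lam ω = l ∧ u ω = g) :=
          (Finset.mul_sum _ _ _).symm
      _ = 1 / 2 ^ K * (1 / 2 ^ K) := by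
          rw [hεunif e, ← pr_fiber p lam (Finset.univ.image lam) hmem (fun ω => u ω = g),
            hune g]
  -- event translations
  have hmu : ∀ (m' : (Fin K → ZMod 2) → ℝ) (e : Fin K → ZMod 2) (ω : Ω), ε ω = e →
      (((fun c' => lam ω (φ (c' + ε ω))) = m')
        ↔ lam ω = fun g => m' (Function.invFun φ g - e)) := by
    intro m' e ω he
    constructor
    · intro h; funext g
      have h3 := congrFun h (Function.invFun φ g - e)
      simp only [he] at h3
      rw [show Function.invFun φ g - e + e = Function.invFun φ g from by abel, hinv2 g] at h3
      exact h3
    · intro h; funext c'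
      rw [he, h]
      simp only [hinv1]
      congr 1; abel
  have hc1 : ∀ (e : Fin K → ZMod 2) (ω : Ω), ε ω = e →
      ((Function.invFun φ (u ω) - ε ω = c) ↔ u ω = φ (c + e)) := by
    intro e ω he
    rw [he]
    constructor
    · intro h
      have h4 : Function.invFun φ (u ω) = c + e := by rw [← h]; abel
      rw [← h4, hinv2]
    · intro h
      rw [h, hinv1]; abel
  -- numerator
  have hNum : pr p (fun ω => (fun c' => lam ω (φ (c' + ε ω))) = m ∧
        Function.invFun φ (u ω) - ε ω = c)
      = ∑ e : Fin K → ZMod 2, 1 / 2 ^ K *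
          ((∑ v : G, pr p (fun ω => lam ω =
            fun w => m (Function.invFun φ (w - v) - e))) * m c / 2 ^ K) := by
    rw [pr_fiber p ε Finset.univ (fun _ => Finset.mem_univ _)
      (fun ω => (fun c' => lam ω (φ (c' + ε ω))) = m ∧ Function.invFun φ (u ω) - ε ω = c)]
    refine Finset.sum_congr rfl fun e _ => ?_
    have step1 : pr p (fun ω => ε ω = e ∧ ((fun c' => lam ω (φ (c' + ε ω))) = m
          ∧ Function.invFun φ (u ω) - ε ω = c))
        = pr p (fun ω => ε ω = e ∧ lam ω = (fun g => m (Function.invFun φ g - e))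
          ∧ u ω = φ (c + e)) :=
      pr_congr p fun ω => by
        constructor
        · rintro ⟨he, h1, h2⟩; exact ⟨he, (hmu m e ω he).1 h1, (hc1 e ω he).1 h2⟩
        · rintro ⟨he, h1, h2⟩; exact ⟨he, (hmu m e ω he).2 h1, (hc1 e ω he).2 h2⟩
    beta_reduce
    rw [step1, hindep e (fun g => m (Function.invFun φ g - e)) (φ (c + e)), hεunif e,
      hjoint (fun g => m (Function.invFun φ g - e)) (φ (c + e))]
    rw [show m (Function.invFun φ (φ (c + e)) - e) = m c from by rw [hinv1]; congr 1; abel]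
  -- denominator
  have hDen : pr p (fun ω => Function.invFun φ (u ω) - ε ω = c) = 1 / 2 ^ K := by
    rw [pr_fiber p ε Finset.univ (fun _ => Finset.mem_univ _)
      (fun ω => Function.invFun φ (u ω) - ε ω = c)]
    have hterm : ∀ e ∈ (Finset.univ : Finset (Fin K → ZMod 2)),
        pr p (fun ω => ε ω = e ∧ Function.invFun φ (u ω) - ε ω = c)
          = 1 / 2 ^ K * (1 / 2 ^ K) := by
      intro e _
      have e1 : pr p (fun ω => ε ω = e ∧ Function.invFun φ (u ω) - ε ω = c)
          = pr p (fun ω => ε ω = e ∧ u ω = φ (c + e)) :=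
        pr_congr p fun ω => by
          constructor
          · rintro ⟨he, h⟩; exact ⟨he, (hc1 e ω he).1 h⟩
          · rintro ⟨he, h⟩; exact ⟨he, (hc1 e ω he).2 h⟩
      rw [e1]; exact hepsu e (φ (c + e))
    rw [Finset.sum_congr rfl hterm, Finset.sum_const, Finset.card_univ]
    have hcK : (Fintype.card (Fin K → ZMod 2) : ℝ) = 2 ^ K := by
      simp [Fintype.card_fun]
    rw [nsmul_eq_mul, hcK]
    field_simp
  -- probability of each value of μ₁
  have hmuv : ∀ (m' : (Fin K → ZMod 2) → ℝ),
      pr p (fun ω => (fun c' => lam ω (φ (c' + ε ω))) = m')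
      = ∑ e : Fin K → ZMod 2,
          1 / 2 ^ K * pr p (fun ω => lam ω = fun g => m' (Function.invFun φ g - e)) := by
    intro m'
    rw [pr_fiber p ε Finset.univ (fun _ => Finset.mem_univ _)
      (fun ω => (fun c' => lam ω (φ (c' + ε ω))) = m')]
    refine Finset.sum_congr rfl fun e _ => ?_
    have e1 : pr p (fun ω => ε ω = e ∧ (fun c' => lam ω (φ (c' + ε ω))) = m')
        = pr p (fun ω => ε ω = e ∧ lam ω = fun g => m' (Function.invFun φ g - e)) :=
      pr_congr p fun ω => by
        constructor
        · rintro ⟨he, h⟩; exact ⟨he, (hmu m' e ω he).1 h⟩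
        · rintro ⟨he, h⟩; exact ⟨he, (hmu m' e ω he).2 h⟩
    beta_reduce
    rw [e1, hepslam e (fun g => m' (Function.invFun φ g - e))]
  -- RHS simplification
  have hRHS : (∑ v : Fin K → ZMod 2,
        pr p (fun ω => (fun c' => lam ω (φ (c' + ε ω))) = fun w => m (w - v)))
      = ∑ e : Fin K → ZMod 2,
          pr p (fun ω => lam ω = fun g => m (Function.invFun φ g - e)) := by
    have hcK : (Fintype.card (Fin K → ZMod 2) : ℝ) = 2 ^ K := by
      simp [Fintype.card_fun]
    calc (∑ v : Fin K → ZMod 2,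
          pr p (fun ω => (fun c' => lam ω (φ (c' + ε ω))) = fun w => m (w - v)))
        = ∑ v : Fin K → ZMod 2, ∑ e : Fin K → ZMod 2, 1 / 2 ^ K *
            pr p (fun ω => lam ω = fun g => m (Function.invFun φ g - e - v)) :=
          Finset.sum_congr rfl fun v _ => hmuv (fun w => m (w - v))
      _ = ∑ v : Fin K → ZMod 2, ∑ e : Fin K → ZMod 2, 1 / 2 ^ K *
            pr p (fun ω => lam ω = fun g => m (Function.invFun φ g - (e + v))) := by
          refine Finset.sum_congr rfl fun v _ => Finset.sum_congr rfl fun e _ => ?_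
          rw [show (fun g => m (Function.invFun φ g - e - v))
            = fun g => m (Function.invFun φ g - (e + v)) from
            funext fun g => by rw [sub_sub]]
      _ = ∑ v : Fin K → ZMod 2, ∑ e : Fin K → ZMod 2, 1 / 2 ^ K *
            pr p (fun ω => lam ω = fun g => m (Function.invFun φ g - e)) :=
          Finset.sum_congr rfl fun v _ =>
            Equiv.sum_comp (Equiv.addRight v) fun z => 1 / 2 ^ K *
              pr p (fun ω => lam ω = fun g => m (Function.invFun φ g - z))
      _ = ∑ e : Fin K → ZMod 2,
            pr p (fun ω => lam ω = fun g => m (Function.invFun φ g - e)) := by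
          rw [Finset.sum_const, Finset.card_univ, nsmul_eq_mul, hcK, ← Finset.mul_sum,
            ← mul_assoc]
          rw [show (2:ℝ) ^ K * (1 / 2 ^ K) = 1 from by field_simp, one_mul]
  -- per-e value of pr (lam = L m e)
  have hSe : ∀ e : Fin K → ZMod 2,
      pr p (fun ω => lam ω = fun g => m (Function.invFun φ g - e))
      = (∑ v : G, pr p (fun ω => lam ω =
          fun w => m (Function.invFun φ (w - v) - e))) / 2 ^ K := by
    intro e
    rw [hmarg (fun g => m (Function.invFun φ g - e)),
      key_ST p lam (2 ^ K) hGcast h2K hmarg (fun g => m (Function.invFun φ g - e))]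
  -- final assembly
  rw [hNum, hDen, hRHS, Finset.sum_congr rfl fun e (_ : e ∈ Finset.univ) => hSe e,
    ← Finset.sum_div]
  rw [Finset.sum_congr rfl fun (e : Fin K → ZMod 2) (_ : e ∈ Finset.univ) =>
    (show 1 / (2:ℝ) ^ K * ((∑ v : G, pr p (fun ω => lam ω =
        fun w => m (Function.invFun φ (w - v) - e))) * m c / 2 ^ K)
      = (∑ v : G, pr p (fun ω => lam ω =
        fun w => m (Function.invFun φ (w - v) - e))) * (m c / (2 ^ K * 2 ^ K)) from by ring),
    ← Finset.sum_mul]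
  field_simp
end

section
/- Let C be a nonempty affine subspace of (𝔽₂)^m, i ∈ {1,…,m}, and suppose for each j ≠ i we are given λⱼ ∈ { δ_{bⱼ}, u } where b ∈ C is a fixed vector, δ_c denotes the point mass on c ∈ 𝔽₂ and u = (1/2, 1/2). Define ν(c) ∝ Σ_{b' ∈ C, b'ᵢ = c} Π_{j≠i} λⱼ(b'ⱼ) for c ∈ 𝔽₂ (normalized to sum to 1). Then ν is either δ_{bᵢ} or u. -/
open scoped Classical

/-- Product of the input pairs over coordinates other than `i`. -/
private noncomputable def Pr (m : ℕ) (i : Fin m) (lam : Fin m → ZMod 2 → ℝ)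
    (b' : Fin m → ZMod 2) : ℝ :=
  ∏ j ∈ Finset.univ.erase i, lam j (b' j)

/-- Unnormalized marginal. -/
private noncomputable def Nr (m : ℕ) (C : AffineSubspace (ZMod 2) (Fin m → ZMod 2)) (i : Fin m)
    (lam : Fin m → ZMod 2 → ℝ) (c : ZMod 2) : ℝ :=
  ∑ b' : Fin m → ZMod 2, if b' ∈ C ∧ b' i = c then Pr m i lam b' else 0

/-- On a nonempty affine subspace C of (𝔽₂)^m containing b, if each input
probability pair λⱼ (j ≠ i) is either the point mass δ_{bⱼ} or the uniform pair, then the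
normalized marginal ν(c) ∝ Σ_{b' ∈ C, b'ᵢ = c} Π_{j≠i} λⱼ(b'ⱼ) is either δ_{bᵢ} or
uniform. -/
theorem stmt18 (m : ℕ) (C : AffineSubspace (ZMod 2) (Fin m → ZMod 2)) (i : Fin m)
    (b : Fin m → ZMod 2) (hb : b ∈ C) (lam : Fin m → ZMod 2 → ℝ)
    (hlam : ∀ j, j ≠ i →
      lam j = (fun c => if c = b j then (1:ℝ) else 0) ∨ lam j = fun _ => (1:ℝ)/2) :
    (fun c : ZMod 2 =>
        (∑ b' : Fin m → ZMod 2,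
            if b' ∈ C ∧ b' i = c then ∏ j ∈ Finset.univ.erase i, lam j (b' j) else 0) /
          ((∑ b' : Fin m → ZMod 2,
            if b' ∈ C ∧ b' i = 0 then ∏ j ∈ Finset.univ.erase i, lam j (b' j) else 0) +
           (∑ b' : Fin m → ZMod 2,
            if b' ∈ C ∧ b' i = 1 then ∏ j ∈ Finset.univ.erase i, lam j (b' j) else 0)))
      = (fun c : ZMod 2 => if c = b i then (1:ℝ) else 0) ∨
    (fun c : ZMod 2 =>
        (∑ b' : Fin m → ZMod 2,
            if b' ∈ C ∧ b' i = c then ∏ j ∈ Finset.univ.erase i, lam j (b' j) else 0) /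
          ((∑ b' : Fin m → ZMod 2,
            if b' ∈ C ∧ b' i = 0 then ∏ j ∈ Finset.univ.erase i, lam j (b' j) else 0) +
           (∑ b' : Fin m → ZMod 2,
            if b' ∈ C ∧ b' i = 1 then ∏ j ∈ Finset.univ.erase i, lam j (b' j) else 0)))
      = fun _ : ZMod 2 => (1:ℝ)/2 := by
  classical
  show (fun c : ZMod 2 => Nr m C i lam c / (Nr m C i lam 0 + Nr m C i lam 1))
      = (fun c : ZMod 2 => if c = b i then (1:ℝ) else 0) ∨
    (fun c : ZMod 2 => Nr m C i lam c / (Nr m C i lam 0 + Nr m C i lam 1))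
      = fun _ : ZMod 2 => (1:ℝ)/2
  have hx2 : ∀ x : ZMod 2, x = 0 ∨ x = 1 := by decide
  have hPnn : ∀ b', 0 ≤ Pr m i lam b' := by
    intro b'
    apply Finset.prod_nonneg
    intro j hj
    rcases hlam j (Finset.ne_of_mem_erase hj) with h | h <;> rw [h] <;> dsimp only
    · split <;> norm_num
    · norm_num
  have hNnn : ∀ c, 0 ≤ Nr m C i lam c := by
    intro c
    apply Finset.sum_nonneg
    intro b' _
    split
    · exact hPnn b'
    · exact le_refl 0
  have hPb : 0 < Pr m i lam b := by
    apply Finset.prod_pos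
    intro j hj
    rcases hlam j (Finset.ne_of_mem_erase hj) with h | h <;> rw [h] <;> simp
  have hNbi : 0 < Nr m C i lam (b i) := by
    apply Finset.sum_pos' (fun b' _ => by split; exacts [hPnn b', le_refl 0])
    exact ⟨b, Finset.mem_univ b, by simpa [hb] using hPb⟩
  by_cases hcase : ∃ v, v ∈ C ∧
      (∀ j, j ≠ i → lam j = (fun c => if c = b j then (1:ℝ) else 0) → v j = b j) ∧ v i ≠ b i
  · -- balanced case
    right
    obtain ⟨v, hvC, hvS, hvi⟩ := hcase
    have hdir : v - b ∈ C.direction := AffineSubspace.vsub_mem_direction hvC hb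
    have hmem : ∀ x : Fin m → ZMod 2, x ∈ C → x + (v - b) ∈ C := by
      intro x hx
      have h1 := AffineSubspace.vadd_mem_of_mem_direction hdir hx
      simpa [add_comm] using h1
    have hdd : ∀ x : Fin m → ZMod 2, (x + (v - b)) + (v - b) = x := by
      intro x
      funext j
      simp only [Pi.add_apply, Pi.sub_apply]
      have : ∀ a d : ZMod 2, a + d + d = a := by decide
      exact this _ _
    have hmemiff : ∀ x : Fin m → ZMod 2, x + (v - b) ∈ C ↔ x ∈ C := by
      intro x
      constructor
      · intro hx
        have := hmem _ hx
        rwa [hdd] at this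
      · exact hmem x
    have hvdi : v i - b i = 1 := by
      have : ∀ a c : ZMod 2, a ≠ c → a - c = 1 := by decide
      exact this _ _ hvi
    have hPinv : ∀ x, Pr m i lam (x + (v - b)) = Pr m i lam x := by
      intro x
      apply Finset.prod_congr rfl
      intro j hj
      have hjne := Finset.ne_of_mem_erase hj
      rcases hlam j hjne with h | h
      · have hvj : v j = b j := hvS j hjne h
        have hxj : (x + (v - b)) j = x j := by
          show x j + (v j - b j) = x j
          rw [hvj, sub_self, add_zero]
        rw [hxj]
      · rw [h]
    have hadd1 : ∀ a : ZMod 2, a + 1 = 1 ↔ a = 0 := by decide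
    have hswap : Nr m C i lam 0 = Nr m C i lam 1 := by
      unfold Nr
      refine Fintype.sum_equiv (Equiv.addRight (v - b)) _ _ ?_
      intro x
      have hco : (x + (v - b)) i = x i + 1 := by
        show x i + (v i - b i) = x i + 1
        rw [hvdi]
      simp only [Equiv.coe_addRight, hPinv, hco, hmemiff, hadd1]
    have hN0pos : 0 < Nr m C i lam 0 := by
      rcases hx2 (b i) with h | h
      · rw [← h]; exact hNbi
      · rw [hswap, ← h]; exact hNbi
    have hden : Nr m C i lam 0 + Nr m C i lam 1 ≠ 0 := by
      rw [← hswap]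
      positivity
    funext c
    have hc : Nr m C i lam c = Nr m C i lam 0 := by
      rcases hx2 c with h | h <;> rw [h]
      rw [hswap]
    rw [hc, ← hswap]
    have hne : Nr m C i lam 0 + Nr m C i lam 0 ≠ 0 := by positivity
    rw [div_eq_iff hne]
    ring
  · -- point-mass case
    left
    push_neg at hcase
    have hNz : ∀ c, c ≠ b i → Nr m C i lam c = 0 := by
      intro c hc
      apply Finset.sum_eq_zero
      intro b' _
      split
      · rename_i hcond
        obtain ⟨hb'C, hb'i⟩ := hcond
        by_contra hP
        have hall : ∀ j, j ≠ i → lam j = (fun c => if c = b j then (1:ℝ) else 0) → b' j = b j := by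
          intro j hj hδ
          by_contra hne
          apply hP
          apply Finset.prod_eq_zero (Finset.mem_erase.mpr ⟨hj, Finset.mem_univ j⟩)
          rw [hδ]
          simp [hne]
        have := hcase b' hb'C hall
        exact hc (hb'i ▸ this)
      · rfl
    funext c
    have hden : Nr m C i lam 0 + Nr m C i lam 1 = Nr m C i lam (b i) := by
      rcases hx2 (b i) with h | h
      · rw [hNz 1 (by rw [h]; exact one_ne_zero), h, add_zero]
      · rw [hNz 0 (by rw [h]; exact zero_ne_one), h, zero_add]
    rw [hden]
    by_cases hc : c = b i
    · rw [hc, if_pos rfl, div_self (ne_of_gt hNbi)]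
    · rw [if_neg hc, hNz c hc, zero_div]
end
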